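/- arXiv:2012.15680 — 2 statements merged into one kernel-verified Lean document; each statement's English description precedes it below -/
import Mathlib

section
/- (Proposition, part (i): EDM of low-rank structures, pairwise bound.) Let B ∈ ℝ^{b×n} and M_k, M_l ∈ ℝ^{3×b}, and set X^k = M_k B and X^l = M_l B. Then the difference of Euclidean distance matrices D^{kl} = E(X^k) − E(X^l) satisfies rank(D^{kl}) ≤ min(8, b + 2). -/
/-!
With `G = XᵀX` the Gram matrix of the columns, `‖x_i - x_j‖² = G_ii + G_jj - 2 G_ij`, so
`E(X) = diag(G) 1ᵀ + 1 diag(G)ᵀ - 2G` depends linearly on `G`, and `D^{kl}` is this image of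
`G_k - G_l` at the cost of two rank-one terms. Now `G_k - G_l` is a difference of two Gram matrices
of rank at most 3, and it also factors as `Bᵀ (M_kᵀ M_k - M_lᵀ M_l) B`, of rank at most `b`.
-/

open Matrix

/-- The Euclidean distance matrix of a point configuration `X ∈ ℝ^{3×n}`,
with entries `e i j = ‖x_i − x_j‖²` (columns `x_i` of `X`). -/
noncomputable def EDM {n : ℕ} (X : Matrix (Fin 3) (Fin n) ℝ) :
    Matrix (Fin n) (Fin n) ℝ :=
  Matrix.of fun i j => ∑ k, (X k i - X k j) ^ 2

namespace Matrix

variable {K l m m' n : Type*} [Field K] [Fintype n]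

theorem rank_add_le (A C : Matrix m n K) : (A + C).rank ≤ A.rank + C.rank := by
  have hrange : LinearMap.range (A + C).mulVecLin ≤
      LinearMap.range A.mulVecLin ⊔ LinearMap.range C.mulVecLin := by
    rintro _ ⟨v, rfl⟩
    rw [mulVecLin_add]
    exact Submodule.add_mem_sup ⟨v, rfl⟩ ⟨v, rfl⟩
  exact (Submodule.finrank_mono hrange).trans (Submodule.finrank_add_le_finrank_add_finrank _ _)

theorem rank_neg (A : Matrix m n K) : (-A).rank = A.rank := by
  rw [← neg_one_smul K A]
  exact rank_smul_of_mem_nonZeroDivisors A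
    (mem_nonZeroDivisors_of_ne_zero (neg_ne_zero.2 one_ne_zero))

theorem rank_sub_le (A C : Matrix m n K) : (A - C).rank ≤ A.rank + C.rank := by
  simpa only [sub_eq_add_neg, rank_neg] using rank_add_le A (-C)

theorem rank_smul_le (c : K) (A : Matrix m n K) : (c • A).rank ≤ A.rank := by
  rcases eq_or_ne c 0 with rfl | hc
  · simp
  · exact (rank_smul_of_mem_nonZeroDivisors A (mem_nonZeroDivisors_of_ne_zero hc)).le

theorem rank_transpose_mul_self_sub_le [Fintype m] [Fintype m'] (X : Matrix m n K)
    (Y : Matrix m' n K) : (Xᵀ * X - Yᵀ * Y).rank ≤ Fintype.card m + Fintype.card m' :=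
  (rank_sub_le _ _).trans <| add_le_add
    ((rank_mul_le_left _ _).trans (rank_le_card_width _))
    ((rank_mul_le_left _ _).trans (rank_le_card_width _))

theorem rank_transpose_mul_self_sub_of_mul_le [Fintype m] [Fintype l] (M N : Matrix m l K)
    (B : Matrix l n K) : ((M * B)ᵀ * (M * B) - (N * B)ᵀ * (N * B)).rank ≤ Fintype.card l := by
  have hfactor :
      (M * B)ᵀ * (M * B) - (N * B)ᵀ * (N * B) = Bᵀ * ((Mᵀ * M - Nᵀ * N) * B) := by
    simp only [transpose_mul, Matrix.sub_mul, Matrix.mul_sub, Matrix.mul_assoc]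
  rw [hfactor]
  exact (rank_mul_le_left _ _).trans (rank_le_card_width _)

end Matrix

def gramToEDM {R n : Type*} [CommRing R] (G : Matrix n n R) : Matrix n n R :=
  vecMulVec G.diag 1 + vecMulVec 1 G.diag - (2 : R) • G

theorem gramToEDM_sub {R n : Type*} [CommRing R] (G H : Matrix n n R) :
    gramToEDM (G - H) = gramToEDM G - gramToEDM H := by
  ext i j
  simp only [gramToEDM, Matrix.sub_apply, Matrix.add_apply, Matrix.smul_apply, vecMulVec_apply,
    diag_apply, Pi.one_apply, smul_eq_mul]
  ring

theorem rank_gramToEDM_le {K n : Type*} [Field K] [Fintype n] (G : Matrix n n K) :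
    (gramToEDM G).rank ≤ G.rank + 2 := by
  calc (gramToEDM G).rank
      ≤ (vecMulVec G.diag 1).rank + (vecMulVec 1 G.diag).rank + ((2 : K) • G).rank :=
        (rank_sub_le _ _).trans (Nat.add_le_add_right (rank_add_le _ _) _)
    _ ≤ 1 + 1 + G.rank := by
        gcongr
        exacts [rank_vecMulVec_le _ _, rank_vecMulVec_le _ _, rank_smul_le _ _]
    _ = G.rank + 2 := by ring

theorem EDM_eq_gramToEDM {n : ℕ} (X : Matrix (Fin 3) (Fin n) ℝ) :
    EDM X = gramToEDM (Xᵀ * X) := by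
  ext i j
  simp only [EDM, gramToEDM, of_apply, Matrix.sub_apply, Matrix.add_apply, Matrix.smul_apply,
    vecMulVec_apply, diag_apply, Pi.one_apply, smul_eq_mul, mul_apply, transpose_apply,
    Fin.sum_univ_three]
  ring

/-- Proposition, part (i). For `B ∈ ℝ^{b×n}` and
`M_k, M_l ∈ ℝ^{3×b}`, with `X^k = M_k B` and `X^l = M_l B`, the difference of
Euclidean distance matrices `D^{kl} = E(X^k) − E(X^l)` satisfies
`rank(D^{kl}) ≤ min(8, b + 2)`. -/
theorem edm_diff_rank_le_of_lowRank {b n : ℕ}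
    (B : Matrix (Fin b) (Fin n) ℝ)
    (Mk Ml : Matrix (Fin 3) (Fin b) ℝ) :
    (EDM (Mk * B) - EDM (Ml * B)).rank ≤ min 8 (b + 2) := by
  rw [EDM_eq_gramToEDM, EDM_eq_gramToEDM, ← gramToEDM_sub]
  have h6 := rank_transpose_mul_self_sub_le (Mk * B) (Ml * B)
  have hb := rank_transpose_mul_self_sub_of_mul_le Mk Ml B
  have := rank_gramToEDM_le ((Mk * B)ᵀ * (Mk * B) - (Ml * B)ᵀ * (Ml * B))
  simp only [Fintype.card_fin] at h6 hb
  omega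
end

section
/- (Proposition, part (ii): EDM of low-rank structures, stacked bound.) Let B ∈ ℝ^{b×n} and M_1, …, M_m ∈ ℝ^{3×b}, and set X^k = M_k B for k = 1, …, m. For each pair of views (k, l) let D^{kl} = E(X^k) − E(X^l) ∈ ℝ^{n×n}, and let 𝐃 be the vertical stacking of the matrices D^{kl} over all pairs 1 ≤ k < l ≤ m. Then rank(𝐃) ≤ (b+1)(b+2)/2. -/
open Matrix

/-!
Write `y_j = (1, b_j) ∈ ℝ^{b+1}` for the `j`-th column `b_j` of `B`. Then
`x_i^k - x_j^k = M_k b_i - M_k b_j` is, for fixed `i`, a linear form in `y_j`, so every row of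
`E(X^k)`, and hence every row of `𝐃`, is a quadratic form in `y_j` as a function of `j`.
These functions lie in the span of the `(b+1)(b+2)/2` monomials `j ↦ y_j(s) y_j(t)`, `{s, t}`
an unordered pair of coordinates, which bounds the rank of `𝐃`.
-/

theorem Matrix.rank_le_finrank_of_row_mem {m n R : Type*} [Field R] [Finite m] [Fintype n]
    {A : Matrix m n R} {W : Submodule R (n → R)} (hA : ∀ i, A i ∈ W) :
    A.rank ≤ Module.finrank R W := by
  rw [rank_eq_finrank_span_row]
  exact Submodule.finrank_mono (Submodule.span_le.mpr (Set.range_subset_iff.mpr hA))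

section QuadraticMonomials

variable {ι κ : Type*} (y : κ → ι → ℝ)

def quadMonomial : Sym2 ι → κ → ℝ :=
  Sym2.lift ⟨fun s t j => y j s * y j t, fun _ _ => funext fun _ => mul_comm _ _⟩

def quadSpan : Submodule ℝ (κ → ℝ) :=
  Submodule.span ℝ (Set.range (quadMonomial y))

theorem finrank_quadSpan_le [Fintype ι] :
    Module.finrank ℝ (quadSpan y) ≤ (Fintype.card ι + 1).choose 2 :=
  (finrank_range_le_card _).trans Sym2.card.le

theorem sq_linearForm_mem_quadSpan [Fintype ι] (c : ι → ℝ) :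
    (fun j => (∑ s, c s * y j s) ^ 2) ∈ quadSpan y := by
  have hexpand : (fun j => (∑ s, c s * y j s) ^ 2) =
      ∑ s, ∑ t, (c s * c t) • quadMonomial y s(s, t) := by
    ext j
    simp only [sq, Finset.sum_mul_sum, Finset.sum_apply, Pi.smul_apply, smul_eq_mul,
      quadMonomial, Sym2.lift_mk]
    exact Finset.sum_congr rfl fun s _ => Finset.sum_congr rfl fun t _ => by ring
  rw [hexpand]
  exact Submodule.sum_mem _ fun s _ => Submodule.sum_mem _ fun t _ =>
    Submodule.smul_mem _ _ (Submodule.subset_span ⟨_, rfl⟩)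

end QuadraticMonomials

def homCoords {b n : ℕ} (B : Matrix (Fin b) (Fin n) ℝ) : Fin n → Option (Fin b) → ℝ :=
  fun j o => o.elim 1 (B · j)

theorem EDM_mul_row_mem_quadSpan {b n : ℕ} (M : Matrix (Fin 3) (Fin b) ℝ)
    (B : Matrix (Fin b) (Fin n) ℝ) (i : Fin n) :
    EDM (M * B) i ∈ quadSpan (homCoords B) := by
  have hrow : EDM (M * B) i = ∑ r, fun j =>
      (∑ o, (Option.elim o ((M * B) r i) fun s => -M r s) * homCoords B j o) ^ 2 := by
    ext j
    simp only [EDM, of_apply, Finset.sum_apply, Fintype.sum_option, homCoords,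
      Option.elim, mul_one, mul_apply, neg_mul, Finset.sum_neg_distrib, sub_eq_add_neg]
  rw [hrow]
  exact Submodule.sum_mem _ fun r _ => sq_linearForm_mem_quadSpan _ _

/-- Proposition, part (ii). For `B ∈ ℝ^{b×n}` and
`M_1, …, M_m ∈ ℝ^{3×b}` with `X^k = M_k B`, the vertical stacking `𝐃` of the
matrices `D^{kl} = E(X^k) − E(X^l)` over all pairs `1 ≤ k < l ≤ m` satisfies
`rank(𝐃) ≤ (b+1)(b+2)/2`. -/
theorem stacked_edm_diff_rank_le {b n m : ℕ}
    (B : Matrix (Fin b) (Fin n) ℝ)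
    (M : Fin m → Matrix (Fin 3) (Fin b) ℝ) :
    (Matrix.of
      fun (p : {q : Fin m × Fin m // q.1 < q.2} × Fin n) (j : Fin n) =>
        (EDM (M p.1.1.1 * B) - EDM (M p.1.1.2 * B)) p.2 j).rank
      ≤ (b + 1) * (b + 2) / 2 := by
  have hrows : ∀ p : {q : Fin m × Fin m // q.1 < q.2} × Fin n,
      EDM (M p.1.1.1 * B) p.2 - EDM (M p.1.1.2 * B) p.2 ∈ quadSpan (homCoords B) :=
    fun p => sub_mem (EDM_mul_row_mem_quadSpan _ _ _) (EDM_mul_row_mem_quadSpan _ _ _)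
  calc _ ≤ Module.finrank ℝ (quadSpan (homCoords B)) := rank_le_finrank_of_row_mem hrows
    _ ≤ (b + 1 + 1).choose 2 := by
      simpa using finrank_quadSpan_le (homCoords B)
    _ = (b + 1) * (b + 2) / 2 := by
      rw [Nat.choose_two_right, mul_comm]
      rfl
end
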